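/- Let S be an infinite set with DC_S, and suppose DC_{P(S^{<ω})} holds. If (A_a : a ∈ S) is a family of sets each belonging to the quasi-club filter μ_S, then the diagonal intersection Δ_{a∈S} A_a = {σ ∈ [S]^ω : ∀ a ∈ σ, σ ∈ A_a} belongs to μ_S; that is, μ_S is normal. -/

import Mathlib

open Set

universe u

/-- The collection `[S]^ω` of countable subsets of `S`. -/
abbrev Cw (S : Type u) := {σ : Set S // σ.Countable}

/-- Dependent choice for the set `S`. -/
def DCax (S : Type u) : Prop :=
  ∀ R : S → S → Prop, (∀ x, ∃ y, R x y) →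
    ∀ x : S, ∃ f : ℕ → S, f 0 = x ∧ ∀ n, R (f n) (f (n + 1))

/-- `F` is a filter on `[S]^ω`: contains everything, upward closed, closed under
binary intersections. -/
def IsSetFilter (S : Type u) (F : Set (Set (Cw S))) : Prop :=
  Set.univ ∈ F ∧ (∀ A B : Set (Cw S), A ∈ F → A ⊆ B → B ∈ F) ∧
    (∀ A B : Set (Cw S), A ∈ F → B ∈ F → A ∩ B ∈ F)

/-- `F` is fine. -/
def IsFine (S : Type u) (F : Set (Set (Cw S))) : Prop :=
  ∀ τ : Cw S, {σ : Cw S | τ.1 ⊆ σ.1} ∈ F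

/-- `F` has the diagonal intersection property. -/
def HasDiagInter (S : Type u) (F : Set (Set (Cw S))) : Prop :=
  ∀ B : S → Set (Cw S), (∀ a : S, B a ∈ F) →
    {σ : Cw S | ∀ a ∈ σ.1, σ ∈ B a} ∈ F

/-- `F` is normal: every regressive-like assignment on an `F`-positive set is
constant-containing on an `F`-positive set. -/
def IsNormalFilter (S : Type u) (F : Set (Set (Cw S))) : Prop :=
  ∀ A : Set (Cw S), Aᶜ ∉ F →
    ∀ G : Cw S → Cw S, (∀ σ ∈ A, (G σ).1.Nonempty ∧ (G σ).1 ⊆ σ.1) →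
      ∃ a : S, {σ : Cw S | σ ∈ A ∧ a ∈ (G σ).1}ᶜ ∉ F

/-- A supercompactness measure on `[S]^ω`: a (proper) normal fine ultrafilter. -/
def IsSCMeasure (S : Type u) (F : Set (Set (Cw S))) : Prop :=
  IsSetFilter S F ∧ ∅ ∉ F ∧ IsFine S F ∧ HasDiagInter S F ∧
    ∀ A : Set (Cw S), A ∈ F ∨ Aᶜ ∈ F

/-- A quasi-strategy for Player II (who moves at odd-length-so-far positions,
i.e. positions of odd length are II's turn... here: II moves when the current
position has odd length). -/
def IsQStratII (S : Type u) (T : Set (List S)) : Prop :=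
  [] ∈ T ∧ (∀ p ∈ T, Even p.length → ∀ a : S, p ++ [a] ∈ T) ∧
    (∀ p ∈ T, ¬ Even p.length → ∃ b : S, p ++ [b] ∈ T)

/-- A quasi-strategy for Player I. -/
def IsQStratI (S : Type u) (T : Set (List S)) : Prop :=
  [] ∈ T ∧ (∀ p ∈ T, ¬ Even p.length → ∀ b : S, p ++ [b] ∈ T) ∧
    (∀ p ∈ T, Even p.length → ∃ a : S, p ++ [a] ∈ T)

/-- The infinite play `f` is consistent with the tree `T`. -/
def PlayThrough (S : Type u) (T : Set (List S)) (f : ℕ → S) : Prop :=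
  ∀ n : ℕ, (List.ofFn fun i : Fin n => f i) ∈ T

/-- The countable set of all elements played in the play `f`. -/
def playSet (S : Type u) (f : ℕ → S) : Cw S :=
  ⟨Set.range f, Set.countable_range f⟩

/-- `T` is a winning quasi-strategy for Player II in the club game on `S` with payoff `A`. -/
def WinsClubII (S : Type u) (T : Set (List S)) (A : Set (Cw S)) : Prop :=
  IsQStratII S T ∧ ∀ f : ℕ → S, PlayThrough S T f → playSet S f ∈ A

/-- `T` is a winning quasi-strategy for Player I in the club game on `S` with payoff `A`
(for Player II). -/
def WinsClubI (S : Type u) (T : Set (List S)) (A : Set (Cw S)) : Prop :=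
  IsQStratI S T ∧ ∀ f : ℕ → S, PlayThrough S T f → playSet S f ∉ A

/-- The quasi-club filter `μ_S`. -/
def qclub (S : Type u) : Set (Set (Cw S)) :=
  {A | ∃ T : Set (List S), WinsClubII S T A}

/-- Winning quasi-strategy for Player II in the length-ω game on `S` with payoff `A ⊆ S^ω`. -/
def WinsGameQSII (S : Type u) (T : Set (List S)) (A : Set (ℕ → S)) : Prop :=
  IsQStratII S T ∧ ∀ f : ℕ → S, PlayThrough S T f → f ∈ A

/-- Winning quasi-strategy for Player I in the length-ω game on `S` with payoff `A ⊆ S^ω`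
(for Player II). -/
def WinsGameQSI (S : Type u) (T : Set (List S)) (A : Set (ℕ → S)) : Prop :=
  IsQStratI S T ∧ ∀ f : ℕ → S, PlayThrough S T f → f ∉ A

/-- The play `f` follows the strategy `s` for Player I (who moves at even rounds). -/
def StratFollowsI (S : Type u) (s : List S → S) (f : ℕ → S) : Prop :=
  ∀ n : ℕ, Even n → f n = s (List.ofFn fun i : Fin n => f i)

/-- The play `f` follows the strategy `s` for Player II (who moves at odd rounds). -/
def StratFollowsII (S : Type u) (s : List S → S) (f : ℕ → S) : Prop :=
  ∀ n : ℕ, ¬ Even n → f n = s (List.ofFn fun i : Fin n => f i)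

/-- `AD_ℝ`: every length-ω two-player game with moves from `ℝ` is determined. -/
def ADReal : Prop :=
  ∀ A : Set (ℕ → ℝ),
    (∃ s : List ℝ → ℝ, ∀ f : ℕ → ℝ, StratFollowsI ℝ s f → f ∉ A) ∨
    (∃ s : List ℝ → ℝ, ∀ f : ℕ → ℝ, StratFollowsII ℝ s f → f ∈ A)

/-!
Choosing a move at every position of Player II refines a winning quasi-strategy to a winning
strategy, so `A ∈ μ_S` iff some strategy `σ` of Player II wins the club game for `A`. Given
winning strategies `σ a` for the `B a`, Player II dovetails all of them against the play `f`
itself: at round `2 * Nat.pair m k + 1` she makes the move that `σ (f m)` makes at round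
`2k + 1` when Player I plays `f 0, f 1, …`. Then the play of `σ (f m)` against `f` uses exactly
the moves of `f`, so the set of moves of `f` lies in `B (f m)` for every `m`.
-/

namespace ClubGame

variable {S : Type u}

lemma ofFn_succ_eq_append (f : ℕ → S) (n : ℕ) :
    (List.ofFn fun i : Fin (n + 1) => f i) = (List.ofFn fun i : Fin n => f i) ++ [f n] := by
  simp only [List.ofFn_succ_last, Fin.val_castSucc, Fin.val_last]

section Strategies

variable {σ : List S → S}

def stratTree (σ : List S → S) : Set (List S) :=
  {p | ∀ k (hk : k < p.length), ¬ Even k → p[k] = σ (p.take k)}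

lemma append_singleton_mem_stratTree {p : List S} {a : S} (hp : p ∈ stratTree σ)
    (ha : ¬ Even p.length → a = σ p) : p ++ [a] ∈ stratTree σ := by
  intro k hk hodd
  rcases Nat.lt_succ_iff_lt_or_eq.mp (by simpa using hk) with hlt | rfl
  · rw [List.getElem_append_left hlt, List.take_append_of_le_length hlt.le]
    exact hp k hlt hodd
  · rw [List.getElem_concat_length rfl, List.take_left]
    exact ha hodd

lemma isQStratII_stratTree (σ : List S → S) : IsQStratII S (stratTree σ) :=
  ⟨fun _ hk => absurd hk (Nat.not_lt_zero _),
    fun _ hp hev _ => append_singleton_mem_stratTree hp (absurd hev),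
    fun p hp _ => ⟨σ p, append_singleton_mem_stratTree hp fun _ => rfl⟩⟩

lemma stratFollowsII_of_playThrough {f : ℕ → S} (hf : PlayThrough S (stratTree σ) f) :
    StratFollowsII S σ f := by
  intro n hn
  have h := hf (n + 1) n (by simp) hn
  simpa only [ofFn_succ_eq_append, List.getElem_concat_length, List.length_ofFn,
    List.take_left' List.length_ofFn] using h

lemma playThrough_of_stratFollowsII {T : Set (List S)} (hT : IsQStratII S T)
    (hσ : ∀ p ∈ T, ¬ Even p.length → p ++ [σ p] ∈ T) {f : ℕ → S}
    (hf : StratFollowsII S σ f) : PlayThrough S T f := by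
  intro n
  induction n with
  | zero => exact hT.1
  | succ n ih =>
    rw [ofFn_succ_eq_append]
    by_cases hn : Even n
    · exact hT.2.1 _ ih (by simpa using hn) _
    · rw [hf n hn]
      exact hσ _ ih (by simpa using hn)

lemma exists_strategy_of_isQStratII [Nonempty S] {T : Set (List S)} (hT : IsQStratII S T) :
    ∃ σ : List S → S, ∀ f, StratFollowsII S σ f → PlayThrough S T f := by
  classical
  choose g hg using hT.2.2
  refine ⟨fun p => if h : p ∈ T ∧ ¬ Even p.length then g p h.1 h.2 else Classical.arbitrary S,
    fun f => playThrough_of_stratFollowsII hT fun p hp hodd => ?_⟩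
  simpa only [dif_pos (And.intro hp hodd)] using hg p hp hodd

lemma mem_qclub_iff [Nonempty S] {A : Set (Cw S)} :
    A ∈ qclub S ↔ ∃ σ : List S → S, ∀ f, StratFollowsII S σ f → playSet S f ∈ A := by
  constructor
  · rintro ⟨T, hT, hwin⟩
    obtain ⟨σ, hσ⟩ := exists_strategy_of_isQStratII hT
    exact ⟨σ, fun f hf => hwin f (hσ f hf)⟩
  · rintro ⟨σ, hσ⟩
    exact ⟨stratTree σ, isQStratII_stratTree σ,
      fun f hf => hσ f (stratFollowsII_of_playThrough hf)⟩

end Strategies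

section Simulation

variable (σ : List S → S) (x : ℕ → S)

/-- The position after `n` moves when Player I plays `x 0, x 1, …` and Player II follows `σ`. -/
def position : ℕ → List S
  | 0 => []
  | n + 1 => position n ++ [if Even n then x (n / 2) else σ (position n)]

def play (n : ℕ) : S :=
  if Even n then x (n / 2) else σ (position σ x n)

lemma position_succ (n : ℕ) : position σ x (n + 1) = position σ x n ++ [play σ x n] := rfl

lemma position_eq_ofFn (n : ℕ) : position σ x n = List.ofFn fun i : Fin n => play σ x i := by
  induction n with
  | zero => rfl
  | succ n ih => rw [position_succ, ih, ofFn_succ_eq_append]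

lemma stratFollowsII_play : StratFollowsII S σ (play σ x) := fun n hn => by
  rw [play, if_neg hn, position_eq_ofFn]

variable {σ x}

lemma position_congr {y : ℕ → S} {n : ℕ} (h : ∀ i, 2 * i < n → x i = y i) :
    position σ x n = position σ y n := by
  induction n with
  | zero => rfl
  | succ n ih =>
    rw [position_succ, position_succ, ih fun i hi => h i (by omega)]
    congr 2
    unfold play
    split_ifs with hn
    · exact h _ (by omega)
    · rw [ih fun i hi => h i (by omega)]

lemma range_play (h : ∀ k, σ (position σ x (2 * k + 1)) ∈ range x) :
    range (play σ x) = range x := by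
  refine (range_subset_iff.2 fun n => ?_).antisymm (range_subset_iff.2 fun k => ⟨2 * k, ?_⟩)
  · rcases Nat.even_or_odd' n with ⟨k, rfl | rfl⟩
    · simp [play]
    · simpa [play, Nat.not_even_bit1] using h k
  · simp [play]

end Simulation

section Diagonal

variable [Inhabited S] (σ : S → List S → S)

/-- At a position `p` of length `2 * Nat.pair m k + 1`, Player II answers as `σ p[m]` would at
round `2k + 1` of the play in which Player I plays `p[0], p[1], …`. -/
def diagStrategy (p : List S) : S :=
  σ (p.getI (p.length / 2).unpair.1)
    (position (σ (p.getI (p.length / 2).unpair.1)) p.getI (2 * (p.length / 2).unpair.2 + 1))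

variable {σ}

/-- The pair `(m, k)` is served at round `2 * Nat.pair m k + 1`, late enough that the simulated
play only reads moves `f i` already made. -/
lemma mem_range_of_stratFollowsII_diagStrategy {f : ℕ → S}
    (hf : StratFollowsII S (diagStrategy σ) f) (m k : ℕ) :
    σ (f m) (position (σ (f m)) f (2 * k + 1)) ∈ range f := by
  set n := Nat.pair m k
  have hlen : (List.ofFn fun i : Fin (2 * n + 1) => f i).length / 2 = n := by
    simp only [List.length_ofFn]; omega
  have hget : ∀ i ≤ n, (List.ofFn fun i : Fin (2 * n + 1) => f i).getI i = f i := fun i hi => by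
    rw [List.getI_eq_getElem _ (by simp; omega), List.getElem_ofFn]
  refine ⟨2 * n + 1, ?_⟩
  rw [hf _ (by simp [parity_simps]), diagStrategy, hlen, Nat.unpair_pair,
    hget m (Nat.left_le_pair m k)]
  congr 1
  exact position_congr fun i hi => hget i (by have := Nat.right_le_pair m k; omega)

lemma playSet_mem_diag_of_stratFollowsII_diagStrategy {B : S → Set (Cw S)}
    (hσ : ∀ a f, StratFollowsII S (σ a) f → playSet S f ∈ B a) {f : ℕ → S}
    (hf : StratFollowsII S (diagStrategy σ) f) :
    ∀ a ∈ (playSet S f).1, playSet S f ∈ B a := by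
  rintro _ ⟨m, rfl⟩
  have hrange : playSet S (play (σ (f m)) f) = playSet S f :=
    Subtype.ext (range_play (mem_range_of_stratFollowsII_diagStrategy hf m))
  exact hrange ▸ hσ (f m) _ (stratFollowsII_play (σ (f m)) f)

end Diagonal

end ClubGame

open ClubGame in
theorem qclub_normal_general (S : Type u) [Infinite S]
    (B : S → Set (Cw S)) (hB : ∀ a : S, B a ∈ qclub S) :
    {σ : Cw S | ∀ a ∈ σ.1, σ ∈ B a} ∈ qclub S := by
  inhabit S
  simp only [mem_qclub_iff] at hB ⊢
  choose σ hσ using hB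
  exact ⟨diagStrategy σ, fun f hf => playSet_mem_diag_of_stratFollowsII_diagStrategy hσ hf⟩

/-- assuming `DC_S` and `DC_{P(S^{<ω})}`, the quasi-club filter is
normal, i.e. closed under diagonal intersections. -/
theorem qclub_normal (S : Type u) [Infinite S] (hDC : DCax S)
    (hDC2 : DCax (Set (List S)))
    (B : S → Set (Cw S)) (hB : ∀ a : S, B a ∈ qclub S) :
    {σ : Cw S | ∀ a ∈ σ.1, σ ∈ B a} ∈ qclub S :=
  qclub_normal_general S B hB
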